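/- arXiv:2004.04188 — 2 statements merged into one kernel-verified Lean document; each statement's English description precedes it below -/
import Mathlib

section
/- Let n ≥ 1, let I = {0,1,…,n} be a node set with depot 0 and collection nodes IC = {1,…,n}, let d : I × I → ℝ be nonnegative and satisfy the triangle inequality d(u,w) ≤ d(u,v) + d(v,w) for all u,v,w ∈ I, let Q > 0 be a real capacity, and let w : IC → ℝ be nonnegative loads. Suppose k ≥ 1 routes are given (each a sequence 0, v_1, …, v_m, 0 with m ≥ 1 and internal nodes in IC), whose internal node sets S_1, …, S_k ⊆ IC are pairwise disjoint, and suppose each route satisfies the capacity constraint Σ_{i∈S_j} w_i ≤ Q. Let S = S_1 ∪ … ∪ S_k. Then the total length of the k routes is at least (1/Q) · Σ_{i∈S} (d(0,i) + d(i,0)) · w_i + (min_{i∈IC} d(0,i) + min_{i∈IC} d(i,0)) · (k − (Σ_{i∈S} w_i)/Q). -/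
/-!
Every collection node `i` of a route splits it into a path from the depot to `i` and a path back,
so by the triangle inequality the route is at least as long as the round trip `d(0,i) + d(i,0)`;
in particular it is at least `min d(0,·) + min d(·,0)`. Writing the route's load as a fraction
`W/Q ≤ 1` of the capacity, its length `L` is then a convex combination
`(1/Q) ∑ L w_i + L (1 - W/Q)` of itself that dominates the per-route share of the bound, and the
fleet bound follows by summing over the pairwise disjoint routes.
-/

/-- The set of collection nodes `IC = {1,…,n}`, i.e. all nodes except the depot `0`. -/
def ICset (n : ℕ) : Finset (Fin (n + 1)) := Finset.univ.erase 0

theorem ICset_nonempty (n : ℕ) (hn : 1 ≤ n) : (ICset n).Nonempty :=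
  ⟨⟨1, by omega⟩, by simp [ICset, Fin.ext_iff]⟩

/-- `min_{i ∈ IC} d(0,i)`. -/
def minToIC (n : ℕ) (hn : 1 ≤ n) (d : Fin (n + 1) → Fin (n + 1) → ℝ) : ℝ :=
  (ICset n).inf' (ICset_nonempty n hn) fun i => d 0 i

/-- `min_{i ∈ IC} d(i,0)`. -/
def minFromIC (n : ℕ) (hn : 1 ≤ n) (d : Fin (n + 1) → Fin (n + 1) → ℝ) : ℝ :=
  (ICset n).inf' (ICset_nonempty n hn) fun i => d i 0

open Finset

def routeLength {α β : Type*} [AddCommMonoid β] (d : α → α → β) (v : ℕ → α) (m : ℕ) : β :=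
  ∑ k ∈ range (m + 1), d (v k) (v (k + 1))

section Path

variable {α β : Type*} [AddCommMonoid β] [PartialOrder β] [IsOrderedAddMonoid β]
  {d : α → α → β}

theorem le_sum_Ico_of_triangle (hd_tri : ∀ u v w, d u w ≤ d u v + d v w) (f : ℕ → α)
    {a b : ℕ} (hab : a < b) : d (f a) (f b) ≤ ∑ t ∈ Ico a b, d (f t) (f (t + 1)) := by
  induction b, hab using Nat.le_induction with
  | base => simp
  | succ b hb ih =>
    rw [sum_Ico_succ_top (by omega)]
    exact (hd_tri _ _ _).trans (add_le_add_left ih _)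

theorem add_le_routeLength (hd_tri : ∀ u v w, d u w ≤ d u v + d v w) {v : ℕ → α} {m k : ℕ}
    {o : α} (h_start : v 0 = o) (h_end : v (m + 1) = o) (hk : 1 ≤ k) (hkm : k ≤ m) :
    d o (v k) + d (v k) o ≤ routeLength d v m := by
  rw [routeLength, range_eq_Ico, ← sum_Ico_consecutive _ (Nat.zero_le k) (by omega : k ≤ m + 1)]
  have h_out := le_sum_Ico_of_triangle hd_tri v (show 0 < k by omega)
  have h_back := le_sum_Ico_of_triangle hd_tri v (show k < m + 1 by omega)
  rw [h_start] at h_out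
  rw [h_end] at h_back
  exact add_le_add h_out h_back

end Path

theorem inv_mul_sum_add_mul_one_sub_le {ι : Type*} (s : Finset ι) (r w : ι → ℝ) {c L Q : ℝ}
    (hQ : 0 < Q) (hw : ∀ i ∈ s, 0 ≤ w i) (hcap : ∑ i ∈ s, w i ≤ Q) (hr : ∀ i ∈ s, r i ≤ L)
    (hc : c ≤ L) :
    1 / Q * ∑ i ∈ s, r i * w i + c * (1 - (∑ i ∈ s, w i) / Q) ≤ L := by
  set W := ∑ i ∈ s, w i
  have hrw : ∑ i ∈ s, r i * w i ≤ L * W := by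
    rw [mul_sum]
    exact sum_le_sum fun i hi => mul_le_mul_of_nonneg_right (hr i hi) (hw i hi)
  have hfrac : 0 ≤ 1 - W / Q := by rwa [sub_nonneg, div_le_one hQ]
  calc 1 / Q * ∑ i ∈ s, r i * w i + c * (1 - W / Q)
      ≤ 1 / Q * (L * W) + L * (1 - W / Q) := by
        gcongr
    _ = L := by field_simp; ring

theorem le_routeLength_of_capacity (n : ℕ) (hn : 1 ≤ n) {d : Fin (n + 1) → Fin (n + 1) → ℝ}
    (hd_tri : ∀ u v w, d u w ≤ d u v + d v w) {Q : ℝ} (hQ : 0 < Q) {w : Fin (n + 1) → ℝ}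
    (hw_nonneg : ∀ i, i ≠ 0 → 0 ≤ w i) {m : ℕ} (hm : 1 ≤ m) {v : ℕ → Fin (n + 1)}
    (h_start : v 0 = 0) (h_end : v (m + 1) = 0) (h_IC : ∀ k, 1 ≤ k → k ≤ m → v k ≠ 0)
    (hcap : ∑ i ∈ (Icc 1 m).image v, w i ≤ Q) :
    1 / Q * ∑ i ∈ (Icc 1 m).image v, (d 0 i + d i 0) * w i
      + (minToIC n hn d + minFromIC n hn d) * (1 - (∑ i ∈ (Icc 1 m).image v, w i) / Q)
      ≤ routeLength d v m := by
  have h_mem : ∀ i ∈ (Icc 1 m).image v, ∃ k, 1 ≤ k ∧ k ≤ m ∧ v k = i := by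
    simp only [mem_image, mem_Icc, and_assoc, imp_self, implies_true]
  have h_round : ∀ i ∈ (Icc 1 m).image v, d 0 i + d i 0 ≤ routeLength d v m := by
    intro i hi
    obtain ⟨k, hk, hkm, rfl⟩ := h_mem i hi
    exact add_le_routeLength hd_tri h_start h_end hk hkm
  refine inv_mul_sum_add_mul_one_sub_le _ _ _ hQ ?_ hcap h_round ?_
  · intro i hi
    obtain ⟨k, hk, hkm, rfl⟩ := h_mem i hi
    exact hw_nonneg _ (h_IC k hk hkm)
  · have h_first : v 1 ∈ ICset n := mem_erase.mpr ⟨h_IC 1 le_rfl hm, mem_univ _⟩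
    have h_first_round := h_round (v 1) (mem_image_of_mem v (mem_Icc.mpr ⟨le_rfl, hm⟩))
    have h_to : minToIC n hn d ≤ d 0 (v 1) := inf'_le _ h_first
    have h_from : minFromIC n hn d ≤ d (v 1) 0 := inf'_le _ h_first
    linarith

theorem stmt_1_general (n K : ℕ) (hn : 1 ≤ n)
    (d : Fin (n + 1) → Fin (n + 1) → ℝ)
    (hd_tri : ∀ u v w, d u w ≤ d u v + d v w)
    (Q : ℝ) (hQ : 0 < Q)
    (w : Fin (n + 1) → ℝ) (hw_nonneg : ∀ i, i ≠ 0 → 0 ≤ w i)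
    (m : Fin K → ℕ) (hm : ∀ j, 1 ≤ m j)
    (v : Fin K → ℕ → Fin (n + 1))
    (hv_start : ∀ j, v j 0 = 0) (hv_end : ∀ j, v j (m j + 1) = 0)
    (hv_IC : ∀ j k, 1 ≤ k → k ≤ m j → v j k ≠ 0)
    (S : Fin K → Finset (Fin (n + 1)))
    (hS : ∀ j, S j = (Finset.Icc 1 (m j)).image (v j))
    (hdisj : ∀ j j', j ≠ j' → Disjoint (S j) (S j'))
    (hcap : ∀ j, ∑ i ∈ S j, w i ≤ Q) :
    (1 / Q) * (∑ i ∈ Finset.univ.biUnion S, (d 0 i + d i 0) * w i)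
      + (minToIC n hn d + minFromIC n hn d)
          * ((K : ℝ) - (∑ i ∈ Finset.univ.biUnion S, w i) / Q)
      ≤ ∑ j, ∑ k ∈ Finset.range (m j + 1), d (v j k) (v j (k + 1)) := by
  have hPD : Set.PairwiseDisjoint ↑(univ : Finset (Fin K)) S := fun j _ j' _ h => hdisj j j' h
  rw [sum_biUnion hPD, sum_biUnion hPD]
  calc _ = ∑ j, (1 / Q * ∑ i ∈ S j, (d 0 i + d i 0) * w i
          + (minToIC n hn d + minFromIC n hn d) * (1 - (∑ i ∈ S j, w i) / Q)) := by
        simp only [sum_add_distrib, ← mul_sum, sum_sub_distrib, sum_div, sum_const, card_univ,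
          Fintype.card_fin, nsmul_eq_mul, mul_one]
    _ ≤ ∑ j, routeLength d (v j) (m j) := sum_le_sum fun j _ => by
        have hcap_j := hcap j
        rw [hS j] at hcap_j ⊢
        exact le_routeLength_of_capacity n hn hd_tri hQ hw_nonneg (hm j) (hv_start j) (hv_end j)
          (hv_IC j) hcap_j

/-- fleet-level routing lower bound used in the relaxation without
routing (IRR) of the SPIRP. -/
theorem stmt_1 (n K : ℕ) (hn : 1 ≤ n) (hK : 1 ≤ K)
    (d : Fin (n + 1) → Fin (n + 1) → ℝ)
    (hd_nonneg : ∀ u v, 0 ≤ d u v)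
    (hd_tri : ∀ u v w, d u w ≤ d u v + d v w)
    (Q : ℝ) (hQ : 0 < Q)
    (w : Fin (n + 1) → ℝ) (hw_nonneg : ∀ i, i ≠ 0 → 0 ≤ w i)
    (m : Fin K → ℕ) (hm : ∀ j, 1 ≤ m j)
    (v : Fin K → ℕ → Fin (n + 1))
    (hv_start : ∀ j, v j 0 = 0) (hv_end : ∀ j, v j (m j + 1) = 0)
    (hv_IC : ∀ j k, 1 ≤ k → k ≤ m j → v j k ≠ 0)
    (hv_inj : ∀ j k l, 1 ≤ k → k ≤ m j → 1 ≤ l → l ≤ m j → v j k = v j l → k = l)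
    (S : Fin K → Finset (Fin (n + 1)))
    (hS : ∀ j, S j = (Finset.Icc 1 (m j)).image (v j))
    (hdisj : ∀ j j', j ≠ j' → Disjoint (S j) (S j'))
    (hcap : ∀ j, ∑ i ∈ S j, w i ≤ Q) :
    (1 / Q) * (∑ i ∈ Finset.univ.biUnion S, (d 0 i + d i 0) * w i)
      + (minToIC n hn d + minFromIC n hn d)
          * ((K : ℝ) - (∑ i ∈ Finset.univ.biUnion S, w i) / Q)
      ≤ ∑ j, ∑ k ∈ Finset.range (m j + 1), d (v j k) (v j (k + 1)) :=
  stmt_1_general n K hn d hd_tri Q hQ w hw_nonneg m hm v hv_start hv_end hv_IC S hS hdisj hcap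
end

section
/- Consider the SPIRP with node set I = {0,1,…,n} (depot 0, collection nodes IC = {1,…,n}, n ≥ 1), periods T = {1,…,τ}, nonnegative distances d : I × I → ℝ satisfying the triangle inequality, nonnegative accumulation rates a_{it} (with a_{0t} = 0), nonnegative requirements r_t, nonnegative costs c, v, h, p, capacity Q > 0, and A_i = Σ_{t∈T} a_{it}. For every feasible solution (X, Y, Z, F, W, I, S) of formulation IR, there exist integers V_t ≥ 0 and reals R_t ∈ [0,1] (t ∈ T) such that (Y, Z, W, I, S, V, R) is a feasible solution of the relaxation IRR, and the IRR objective value of (Y, Z, W, I, S, V, R) is at most the IR objective value of (X, Y, Z, F, W, I, S). Consequently, the optimal value z_IRR of IRR is a lower bound on the optimal value z_IR of IR. -/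
/-!
Fix a period and let `K` be the number of vehicles leaving the depot. By flow conservation the
collected oil can be priced by node potentials: the load flow `F` with `ψ i = d i 0 - m₁` and the
residual flow `Q X - F`, which runs back to the depot along the same routes, with
`φ i = d 0 i - m₀` (both zero at the depot; `m₀`, `m₁` are the minimal distances from and to the
depot). The triangle inequality makes both potentials feasible for the arc lengths reduced by
`m₀` on arcs leaving the depot and `m₁` on arcs entering it, so weak duality gives
`∑ (d 0 i + d i 0) W i + (m₀ + m₁) (Q K - ∑ W i) ≤ Q · (routing cost)`.
Since every vehicle carries at most `Q`, the integer `K` is at least `V = ⌈∑ W i / Q⌉`, and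
`R = V - ∑ W i / Q` is the rounding slack; as `m₀ + m₁ ≥ 0` this yields the objective bound.
-/

open Finset

namespace SPIRP

section Flow

variable {ι : Type*} [Fintype ι] [DecidableEq ι]

def outflow (f : ι → ι → ℝ) (i : ι) : ℝ := ∑ j ∈ univ.erase i, f i j

def inflow (f : ι → ι → ℝ) (i : ι) : ℝ := ∑ j ∈ univ.erase i, f j i

theorem sum_arcs_comm (f : ι → ι → ℝ) :
    ∑ i, ∑ j ∈ univ.erase i, f i j = ∑ j, ∑ i ∈ univ.erase j, f i j :=
  sum_comm' fun i j => by simp [ne_comm]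

theorem sum_arcs_sub_mul (g : ι → ℝ) (f : ι → ι → ℝ) :
    ∑ i, ∑ j ∈ univ.erase i, (g i - g j) * f i j = ∑ i, g i * (outflow f i - inflow f i) := by
  simp only [sub_mul, sum_sub_distrib, mul_sub, outflow, inflow, mul_sum]
  rw [sum_arcs_comm fun i j => g j * f i j]

theorem sum_erase_outflow_sub_inflow (f : ι → ι → ℝ) (o : ι) :
    ∑ i ∈ univ.erase o, (outflow f i - inflow f i) = inflow f o - outflow f o := by
  have h := sum_arcs_sub_mul (fun _ => 1) f
  simp only [sub_self, zero_mul, sum_const_zero, one_mul] at h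
  rw [← add_sum_erase _ _ (mem_univ o)] at h
  linarith

theorem sum_arcs_sub_mul_of_netOutflow {ψ w : ι → ℝ} {f : ι → ι → ℝ} (hψ : ψ o = 0)
    (hf : ∀ i ≠ o, outflow f i - inflow f i = w i) :
    ∑ i, ∑ j ∈ univ.erase i, (ψ i - ψ j) * f i j = ∑ i ∈ univ.erase o, ψ i * w i := by
  rw [sum_arcs_sub_mul, ← add_sum_erase _ _ (mem_univ o), hψ, zero_mul, zero_add]
  exact sum_congr rfl fun i hi => by rw [hf i (ne_of_mem_erase hi)]

variable {o : ι} {Q : ℝ} {X F : ι → ι → ℝ} {W : ι → ℝ}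

theorem collected_le_capacity_mul_outflow (hF : ∀ i j, i ≠ j → 0 ≤ F i j)
    (hFX : ∀ i j, i ≠ j → F i j ≤ Q * X i j) (hflow : ∀ i ≠ o, outflow F i - inflow F i = W i)
    {i : ι} (hi : i ≠ o) : W i ≤ Q * outflow X i := by
  have hin : 0 ≤ inflow F i := sum_nonneg fun j hj => hF j i (ne_of_mem_erase hj)
  have hout : outflow F i ≤ Q * outflow X i := by
    rw [outflow, outflow, mul_sum]
    exact sum_le_sum fun j hj => hFX i j (ne_of_mem_erase hj).symm
  linarith [hflow i hi]

theorem sum_collected_le_capacity_mul_inflow (hF : ∀ i j, i ≠ j → 0 ≤ F i j)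
    (hFX : ∀ i j, i ≠ j → F i j ≤ Q * X i j) (hflow : ∀ i ≠ o, outflow F i - inflow F i = W i) :
    ∑ i ∈ univ.erase o, W i ≤ Q * inflow X o := by
  have hout : 0 ≤ outflow F o := sum_nonneg fun j hj => hF o j (ne_of_mem_erase hj).symm
  have hin : inflow F o ≤ Q * inflow X o := by
    rw [inflow, inflow, mul_sum]
    exact sum_le_sum fun j hj => hFX j o (ne_of_mem_erase hj)
  have hsum := sum_erase_outflow_sub_inflow F o
  rw [sum_congr rfl fun i hi => hflow i (ne_of_mem_erase hi)] at hsum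
  linarith

/-- Weak LP duality: `ψ` prices the flow `F` and `φ` the residual flow `Q • X - F`, which runs
in the opposite direction. -/
theorem sum_potential_mul_collected_le {ψ φ : ι → ℝ} {ℓ : ι → ι → ℝ} (hψo : ψ o = 0)
    (hφo : φ o = 0) (hψ : ∀ i j, i ≠ j → ψ i - ψ j ≤ ℓ i j)
    (hφ : ∀ i j, i ≠ j → φ j - φ i ≤ ℓ i j) (hF : ∀ i j, i ≠ j → 0 ≤ F i j)
    (hFX : ∀ i j, i ≠ j → F i j ≤ Q * X i j) (hflow : ∀ i ≠ o, outflow F i - inflow F i = W i)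
    (hX : ∀ i ≠ o, outflow X i = inflow X i) :
    ∑ i ∈ univ.erase o, (ψ i + φ i) * W i ≤ Q * ∑ i, ∑ j ∈ univ.erase i, ℓ i j * X i j := by
  have hres : ∀ i ≠ o, outflow (fun i j => Q * X i j - F i j) i
      - inflow (fun i j => Q * X i j - F i j) i = -W i := by
    intro i hi
    have hXi := hX i hi
    have hFi := hflow i hi
    simp only [outflow, inflow, sum_sub_distrib, ← mul_sum] at hXi hFi ⊢
    rw [hXi]
    linarith
  have hψF := sum_arcs_sub_mul_of_netOutflow hψo hflow
  have hφG := sum_arcs_sub_mul_of_netOutflow hφo hres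
  calc ∑ i ∈ univ.erase o, (ψ i + φ i) * W i
      = ∑ i, ∑ j ∈ univ.erase i, (ψ i - ψ j) * F i j
          - ∑ i, ∑ j ∈ univ.erase i, (φ i - φ j) * (Q * X i j - F i j) := by
        rw [hψF, hφG, ← sum_sub_distrib]
        exact sum_congr rfl fun i _ => by ring
    _ = ∑ i, ∑ j ∈ univ.erase i,
          ((ψ i - ψ j) * F i j + (φ j - φ i) * (Q * X i j - F i j)) := by
        rw [← sum_sub_distrib]
        exact sum_congr rfl fun i _ => by
          rw [← sum_sub_distrib]; exact sum_congr rfl fun j _ => by ring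
    _ ≤ ∑ i, ∑ j ∈ univ.erase i, ℓ i j * (Q * X i j) := by
        refine sum_le_sum fun i _ => sum_le_sum fun j hj => ?_
        have hij := (ne_of_mem_erase hj).symm
        have := add_le_add (mul_le_mul_of_nonneg_right (hψ i j hij) (hF i j hij))
          (mul_le_mul_of_nonneg_right (hφ i j hij) (sub_nonneg.2 (hFX i j hij)))
        linarith
    _ = Q * ∑ i, ∑ j ∈ univ.erase i, ℓ i j * X i j := by
        rw [mul_sum]
        exact sum_congr rfl fun i _ => by
          rw [mul_sum]; exact sum_congr rfl fun j _ => by ring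

end Flow

section Depot

variable {ι : Type*} [DecidableEq ι] (o : ι) (d : ι → ι → ℝ) (m₀ m₁ : ℝ)

def reducedLength (i j : ι) : ℝ :=
  d i j - (if i = o then m₀ else 0) - (if j = o then m₁ else 0)

def returnPotential : ι → ℝ := Function.update (fun i => d i o - m₁) o 0

def departurePotential : ι → ℝ := Function.update (fun i => d o i - m₀) o 0

variable {o d m₀ m₁}

theorem returnPotential_sub_le (hd : ∀ u v w, d u w ≤ d u v + d v w)
    (hm₀ : ∀ k ≠ o, m₀ ≤ d o k) (hm₁ : ∀ k ≠ o, m₁ ≤ d k o) {i j : ι} (hij : i ≠ j) :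
    returnPotential o d m₁ i - returnPotential o d m₁ j ≤ reducedLength o d m₀ m₁ i j := by
  unfold returnPotential reducedLength
  by_cases hi : i = o
  · subst hi
    simp only [Function.update_self, Function.update_of_ne hij.symm, if_pos, if_neg hij.symm]
    linarith [hm₀ j hij.symm, hm₁ j hij.symm]
  by_cases hj : j = o
  · subst hj
    simp [hi]
  · simp only [Function.update_of_ne hi, Function.update_of_ne hj, if_neg hi, if_neg hj]
    linarith [hd i j o]

theorem departurePotential_sub_le (hd : ∀ u v w, d u w ≤ d u v + d v w)
    (hm₀ : ∀ k ≠ o, m₀ ≤ d o k) (hm₁ : ∀ k ≠ o, m₁ ≤ d k o) {i j : ι} (hij : i ≠ j) :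
    departurePotential o d m₀ j - departurePotential o d m₀ i ≤ reducedLength o d m₀ m₁ i j := by
  unfold departurePotential reducedLength
  by_cases hi : i = o
  · subst hi
    simp [hij.symm]
  by_cases hj : j = o
  · subst hj
    simp only [Function.update_self, Function.update_of_ne hi, if_pos, if_neg hi]
    linarith [hm₀ i hi, hm₁ i hi]
  · simp only [Function.update_of_ne hi, Function.update_of_ne hj, if_neg hi, if_neg hj]
    linarith [hd o i j]

theorem sum_arcs_reducedLength_mul [Fintype ι] (X : ι → ι → ℝ) :
    ∑ i, ∑ j ∈ univ.erase i, reducedLength o d m₀ m₁ i j * X i j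
      = ∑ i, ∑ j ∈ univ.erase i, d i j * X i j - m₀ * outflow X o - m₁ * inflow X o := by
  simp only [reducedLength, sub_mul, sum_sub_distrib, ite_mul, zero_mul]
  rw [sum_arcs_comm fun i j => if j = o then m₁ * X i j else 0]
  simp [outflow, inflow, ← mul_sum]

variable [Fintype ι] {Q : ℝ} {X F : ι → ι → ℝ} {W : ι → ℝ}

theorem routing_cost_lower_bound (hQ : 0 < Q) (hd : ∀ u v w, d u w ≤ d u v + d v w)
    (hm₀ : ∀ k ≠ o, m₀ ≤ d o k) (hm₁ : ∀ k ≠ o, m₁ ≤ d k o) (hF : ∀ i j, i ≠ j → 0 ≤ F i j)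
    (hFX : ∀ i j, i ≠ j → F i j ≤ Q * X i j) (hflow : ∀ i ≠ o, outflow F i - inflow F i = W i)
    (hX : ∀ i ≠ o, outflow X i = inflow X i) (hdepot : inflow X o = outflow X o) :
    ∑ i ∈ univ.erase o, (d o i + d i o) * (W i / Q)
        + (m₀ + m₁) * (outflow X o - ∑ i ∈ univ.erase o, W i / Q)
      ≤ ∑ i, ∑ j ∈ univ.erase i, d i j * X i j := by
  have key := sum_potential_mul_collected_le (ψ := returnPotential o d m₁)
    (φ := departurePotential o d m₀) (Function.update_self _ _ _)
    (Function.update_self _ _ _) (fun _ _ => returnPotential_sub_le hd hm₀ hm₁)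
    (fun _ _ => departurePotential_sub_le hd hm₀ hm₁) hF hFX hflow hX
  rw [sum_arcs_reducedLength_mul, hdepot] at key
  have hpot : ∑ i ∈ univ.erase o,
      (returnPotential o d m₁ i + departurePotential o d m₀ i) * W i
        = ∑ i ∈ univ.erase o, (d o i + d i o) * W i - (m₀ + m₁) * ∑ i ∈ univ.erase o, W i := by
    rw [mul_sum, ← sum_sub_distrib]
    refine sum_congr rfl fun i hi => ?_
    simp only [returnPotential, departurePotential, Function.update_of_ne (ne_of_mem_erase hi)]
    ring
  have hscaled : Q * (∑ i ∈ univ.erase o, (d o i + d i o) * (W i / Q)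
        + (m₀ + m₁) * (outflow X o - ∑ i ∈ univ.erase o, W i / Q))
      = ∑ i ∈ univ.erase o, (d o i + d i o) * W i
        + (m₀ + m₁) * (Q * outflow X o - ∑ i ∈ univ.erase o, W i) := by
    simp only [← sum_div, mul_div_assoc']
    field_simp
  rw [hpot] at key
  refine le_of_mul_le_mul_left ?_ hQ
  linarith

end Depot

theorem ceil_le_sum_of_le {α : Type*} {s : Finset α} {f : α → ℝ} {x : ℝ}
    (hf : ∀ i ∈ s, f i = 0 ∨ f i = 1) (hx : x ≤ ∑ i ∈ s, f i) : (⌈x⌉ : ℝ) ≤ ∑ i ∈ s, f i := by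
  have hint : ∑ i ∈ s, f i = ((∑ i ∈ s, if f i = 1 then 1 else 0 : ℤ) : ℝ) := by
    push_cast
    exact sum_congr rfl fun i hi => by rcases hf i hi with h | h <;> simp [h]
  rw [hint] at hx ⊢
  exact_mod_cast Int.ceil_le.2 hx

end SPIRP

theorem minToIC_le {n : ℕ} (hn : 1 ≤ n) (d : Fin (n + 1) → Fin (n + 1) → ℝ) {k : Fin (n + 1)}
    (hk : k ≠ 0) : minToIC n hn d ≤ d 0 k :=
  inf'_le _ (mem_erase.2 ⟨hk, mem_univ k⟩)

theorem minFromIC_le {n : ℕ} (hn : 1 ≤ n) (d : Fin (n + 1) → Fin (n + 1) → ℝ) {k : Fin (n + 1)}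
    (hk : k ≠ 0) : minFromIC n hn d ≤ d k 0 :=
  inf'_le _ (mem_erase.2 ⟨hk, mem_univ k⟩)

theorem minToIC_add_minFromIC_nonneg {n : ℕ} (hn : 1 ≤ n) {d : Fin (n + 1) → Fin (n + 1) → ℝ}
    (hd : ∀ u v, 0 ≤ d u v) : 0 ≤ minToIC n hn d + minFromIC n hn d :=
  add_nonneg (le_inf' _ _ fun k _ => hd 0 k) (le_inf' _ _ fun k _ => hd k 0)

theorem stmt_8_general (n τ : ℕ) (hn : 1 ≤ n)
    (d : Fin (n + 1) → Fin (n + 1) → ℝ)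
    (hd_nonneg : ∀ u v, 0 ≤ d u v)
    (hd_tri : ∀ u v w, d u w ≤ d u v + d v w)
    (a : Fin (n + 1) → ℕ → ℝ)
    (ha_nonneg : ∀ i t, 0 ≤ a i t)
    (c v h p : ℝ) (hc : 0 ≤ c) (hv : 0 ≤ v)
    (Q : ℝ) (hQ : 0 < Q)
    (X : Fin (n + 1) → Fin (n + 1) → ℕ → ℝ)
    (Y : Fin (n + 1) → ℕ → ℝ)
    (F : Fin (n + 1) → Fin (n + 1) → ℕ → ℝ)
    (W : Fin (n + 1) → ℕ → ℝ)
    (Inv : Fin (n + 1) → ℕ → ℝ)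
    (S : ℕ → ℝ)
    -- integrality and nonnegativity requirements (std-19)–(std-25)
    (hX_bin : ∀ i j, ∀ t ∈ Finset.Icc 1 τ, i ≠ j → X i j t = 0 ∨ X i j t = 1)
    (hF_nonneg : ∀ i j, ∀ t ∈ Finset.Icc 1 τ, i ≠ j → 0 ≤ F i j t)
    (hW_nonneg : ∀ i, i ≠ 0 → ∀ t ∈ Finset.Icc 1 τ, 0 ≤ W i t)
    -- (std-1) flow conservation at collection nodes
    (hflow : ∀ i, i ≠ 0 → ∀ t ∈ Finset.Icc 1 τ,
      (∑ j ∈ Finset.univ.filter (fun j => j ≠ i), F i j t)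
        - (∑ j ∈ Finset.univ.filter (fun j => j ≠ i), F j i t) = W i t)
    -- (std-2)
    (hFcap : ∀ i j, ∀ t ∈ Finset.Icc 1 τ, i ≠ j →
      F i j t ≤ (Q - a j t) * X i j t)
    -- (std-5), (std-6) degree constraints
    (hdeg_in : ∀ i, i ≠ 0 → ∀ t ∈ Finset.Icc 1 τ,
      (∑ j ∈ Finset.univ.filter (fun j => j ≠ i), X j i t) = Y i t)
    (hdeg_out : ∀ i, i ≠ 0 → ∀ t ∈ Finset.Icc 1 τ,
      (∑ j ∈ Finset.univ.filter (fun j => j ≠ i), X i j t) = Y i t)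
    -- (std-7) depot vehicle balance
    (hdepot : ∀ t ∈ Finset.Icc 1 τ,
      ∑ i ∈ ICset n, X i 0 t = ∑ i ∈ ICset n, X 0 i t) :
    ∃ (V : ℕ → ℤ) (R : ℕ → ℝ),
      -- (relax-23a) nonnegative integer numbers of vehicles
      (∀ t ∈ Finset.Icc 1 τ, 0 ≤ V t) ∧
      -- (relax-26)
      (∀ t ∈ Finset.Icc 1 τ, 0 ≤ R t ∧ R t ≤ 1) ∧
      -- (relax-1)
      (∀ t ∈ Finset.Icc 1 τ, (V t : ℝ) = (∑ i ∈ ICset n, W i t / Q) + R t) ∧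
      -- (relax-8)
      (∀ i, i ≠ 0 → ∀ t ∈ Finset.Icc 1 τ, W i t ≤ Q * Y i t) ∧
      -- the IRR objective value is at most the IR objective value
      c * (∑ t ∈ Finset.Icc 1 τ,
            ((∑ i ∈ ICset n, (d 0 i + d i 0) * (W i t / Q))
              + (minToIC n hn d + minFromIC n hn d) * R t))
        + v * (∑ t ∈ Finset.Icc 1 τ, (V t : ℝ))
        + h * (∑ t ∈ Finset.Icc 1 τ, Inv 0 t)
        + p * (∑ t ∈ Finset.Icc 1 τ, S t)
      ≤ c * (∑ t ∈ Finset.Icc 1 τ,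
              ∑ i, ∑ j ∈ Finset.univ.filter (fun j => j ≠ i), d i j * X i j t)
        + v * (∑ t ∈ Finset.Icc 1 τ, ∑ i ∈ ICset n, X 0 i t)
        + h * (∑ t ∈ Finset.Icc 1 τ, Inv 0 t)
        + p * (∑ t ∈ Finset.Icc 1 τ, S t) := by
  simp only [filter_ne'] at hflow hdeg_in hdeg_out ⊢
  have hm := minToIC_add_minFromIC_nonneg hn hd_nonneg
  have hFX : ∀ t ∈ Icc 1 τ, ∀ i j, i ≠ j → F i j t ≤ Q * X i j t := fun t ht i j hij => by
    have hX : 0 ≤ X i j t := by rcases hX_bin i j t ht hij with hx | hx <;> simp [hx]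
    linarith [hFcap i j t ht hij, mul_nonneg (ha_nonneg j t) hX]
  have hK : ∀ t ∈ Icc 1 τ, (⌈∑ i ∈ ICset n, W i t / Q⌉ : ℝ) ≤ ∑ i ∈ ICset n, X 0 i t := by
    intro t ht
    refine SPIRP.ceil_le_sum_of_le (fun i hi => hX_bin 0 i t ht (ne_of_mem_erase hi).symm) ?_
    rw [← sum_div, div_le_iff₀ hQ, mul_comm, ← hdepot t ht]
    exact SPIRP.sum_collected_le_capacity_mul_inflow (hF_nonneg · · t ht) (hFX t ht)
      fun i hi => hflow i hi t ht
  refine ⟨fun t => ⌈∑ i ∈ ICset n, W i t / Q⌉,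
    fun t => ⌈∑ i ∈ ICset n, W i t / Q⌉ - ∑ i ∈ ICset n, W i t / Q,
    fun t ht => ?_, fun t _ => ⟨?_, ?_⟩, fun t _ => by ring, fun i hi t ht => ?_, ?_⟩
  · exact Int.ceil_nonneg
      (sum_nonneg fun i hi => div_nonneg (hW_nonneg i (ne_of_mem_erase hi) t ht) hQ.le)
  · exact sub_nonneg.2 (Int.le_ceil _)
  · linarith [Int.ceil_lt_add_one (∑ i ∈ ICset n, W i t / Q)]
  · rw [← hdeg_out i hi t ht]
    exact SPIRP.collected_le_capacity_mul_outflow (hF_nonneg · · t ht) (hFX t ht)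
      (fun i hi => hflow i hi t ht) hi
  · gcongr with t ht
    · calc _ ≤ ∑ i ∈ ICset n, (d 0 i + d i 0) * (W i t / Q)
            + (minToIC n hn d + minFromIC n hn d)
              * (∑ i ∈ ICset n, X 0 i t - ∑ i ∈ ICset n, W i t / Q) := by
            gcongr; exact sub_le_sub_right (hK t ht) _
        _ ≤ _ := SPIRP.routing_cost_lower_bound hQ hd_tri (fun _ => minToIC_le hn d)
            (fun _ => minFromIC_le hn d) (hF_nonneg · · t ht)
            (hFX t ht) (fun i hi => hflow i hi t ht)
            (fun i hi => (hdeg_out i hi t ht).trans (hdeg_in i hi t ht).symm) (hdepot t ht)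
    · exact hK _ ‹_›

/-- validity of the relaxation without routing (IRR) of the SPIRP.
For every feasible solution `(X, Y, Z, F, W, Inv, S)` of formulation IR there exist
integers `V t ≥ 0` and reals `R t ∈ [0,1]` such that `(Y, Z, W, Inv, S, V, R)` is
feasible for IRR (the IRR constraints shared with IR being the hypotheses below),
and the IRR objective value is at most the IR objective value.
Nodes are `Fin (n+1)` with depot `0`; periods are `t ∈ Finset.Icc 1 τ`, with
inventories indexed by `t ∈ {0,…,τ}` and `A i = ∑ t ∈ Icc 1 τ, a i t`. -/
theorem stmt_8 (n τ : ℕ) (hn : 1 ≤ n) (hτ : 1 ≤ τ)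
    (d : Fin (n + 1) → Fin (n + 1) → ℝ)
    (hd_nonneg : ∀ u v, 0 ≤ d u v)
    (hd_tri : ∀ u v w, d u w ≤ d u v + d v w)
    (a : Fin (n + 1) → ℕ → ℝ)
    (ha_nonneg : ∀ i t, 0 ≤ a i t)
    (ha_depot : ∀ t, a 0 t = 0)
    (r : ℕ → ℝ) (hr_nonneg : ∀ t, 0 ≤ r t)
    (c v h p : ℝ) (hc : 0 ≤ c) (hv : 0 ≤ v) (hh : 0 ≤ h) (hp : 0 ≤ p)
    (Q : ℝ) (hQ : 0 < Q)
    (X : Fin (n + 1) → Fin (n + 1) → ℕ → ℝ)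
    (Y : Fin (n + 1) → ℕ → ℝ)
    (Z : Fin (n + 1) → ℝ)
    (F : Fin (n + 1) → Fin (n + 1) → ℕ → ℝ)
    (W : Fin (n + 1) → ℕ → ℝ)
    (Inv : Fin (n + 1) → ℕ → ℝ)
    (S : ℕ → ℝ)
    -- integrality and nonnegativity requirements (std-19)–(std-25)
    (hX_bin : ∀ i j, ∀ t ∈ Finset.Icc 1 τ, i ≠ j → X i j t = 0 ∨ X i j t = 1)
    (hY_bin : ∀ i, i ≠ 0 → ∀ t ∈ Finset.Icc 1 τ, Y i t = 0 ∨ Y i t = 1)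
    (hZ_bin : ∀ i, i ≠ 0 → Z i = 0 ∨ Z i = 1)
    (hF_nonneg : ∀ i j, ∀ t ∈ Finset.Icc 1 τ, i ≠ j → 0 ≤ F i j t)
    (hW_nonneg : ∀ i, i ≠ 0 → ∀ t ∈ Finset.Icc 1 τ, 0 ≤ W i t)
    (hI_nonneg : ∀ i, ∀ t ∈ Finset.Icc 0 τ, 0 ≤ Inv i t)
    (hS_nonneg : ∀ t ∈ Finset.Icc 1 τ, 0 ≤ S t)
    -- (std-1) flow conservation at collection nodes
    (hflow : ∀ i, i ≠ 0 → ∀ t ∈ Finset.Icc 1 τ,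
      (∑ j ∈ Finset.univ.filter (fun j => j ≠ i), F i j t)
        - (∑ j ∈ Finset.univ.filter (fun j => j ≠ i), F j i t) = W i t)
    -- (std-2)
    (hFcap : ∀ i j, ∀ t ∈ Finset.Icc 1 τ, i ≠ j →
      F i j t ≤ (Q - a j t) * X i j t)
    -- (std-3)
    (hFcap' : ∀ i j, j ≠ 0 → ∀ t ∈ Finset.Icc 1 τ, i ≠ j →
      F i j t ≤ Q - W j t)
    -- (std-4)
    (hFlb : ∀ i j, i ≠ 0 → ∀ t ∈ Finset.Icc 1 τ, i ≠ j →
      W i t - (∑ s ∈ Finset.Icc 1 τ, a i s) * (1 - X i j t) ≤ F i j t)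
    -- (std-5), (std-6) degree constraints
    (hdeg_in : ∀ i, i ≠ 0 → ∀ t ∈ Finset.Icc 1 τ,
      (∑ j ∈ Finset.univ.filter (fun j => j ≠ i), X j i t) = Y i t)
    (hdeg_out : ∀ i, i ≠ 0 → ∀ t ∈ Finset.Icc 1 τ,
      (∑ j ∈ Finset.univ.filter (fun j => j ≠ i), X i j t) = Y i t)
    -- (std-7) depot vehicle balance
    (hdepot : ∀ t ∈ Finset.Icc 1 τ,
      ∑ i ∈ ICset n, X i 0 t = ∑ i ∈ ICset n, X 0 i t)
    -- (std-9)
    (hWY : ∀ i, i ≠ 0 → ∀ t ∈ Finset.Icc 1 τ,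
      W i t ≤ (∑ s ∈ Finset.Icc 1 τ, a i s) * Y i t)
    -- (std-10)
    (hIY : ∀ i, i ≠ 0 → ∀ t ∈ Finset.Icc 1 τ,
      Inv i t ≤ (∑ s ∈ Finset.Icc 1 τ, a i s) * (1 - Y i t))
    -- (std-11) inventory balance at collection nodes
    (hbal : ∀ i, i ≠ 0 → ∀ t ∈ Finset.Icc 1 τ,
      Inv i t = Inv i (t - 1) + a i t * Z i - W i t)
    -- (std-12) cyclicity
    (hcyc : ∀ i, Inv i 0 = Inv i τ)
    -- (std-13) inventory balance at the depot
    (hdbal : ∀ t ∈ Finset.Icc 1 τ,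
      Inv 0 t = Inv 0 (t - 1) + (∑ i ∈ ICset n, W i t) + S t - r t)
    -- (std-14), (std-15)
    (hZY : ∀ i, i ≠ 0 → Z i ≤ ∑ t ∈ Finset.Icc 1 τ, Y i t)
    (hYZ : ∀ i, i ≠ 0 → ∀ t ∈ Finset.Icc 1 τ, Y i t ≤ Z i) :
    ∃ (V : ℕ → ℤ) (R : ℕ → ℝ),
      -- (relax-23a) nonnegative integer numbers of vehicles
      (∀ t ∈ Finset.Icc 1 τ, 0 ≤ V t) ∧
      -- (relax-26)
      (∀ t ∈ Finset.Icc 1 τ, 0 ≤ R t ∧ R t ≤ 1) ∧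
      -- (relax-1)
      (∀ t ∈ Finset.Icc 1 τ, (V t : ℝ) = (∑ i ∈ ICset n, W i t / Q) + R t) ∧
      -- (relax-8)
      (∀ i, i ≠ 0 → ∀ t ∈ Finset.Icc 1 τ, W i t ≤ Q * Y i t) ∧
      -- the IRR objective value is at most the IR objective value
      c * (∑ t ∈ Finset.Icc 1 τ,
            ((∑ i ∈ ICset n, (d 0 i + d i 0) * (W i t / Q))
              + (minToIC n hn d + minFromIC n hn d) * R t))
        + v * (∑ t ∈ Finset.Icc 1 τ, (V t : ℝ))
        + h * (∑ t ∈ Finset.Icc 1 τ, Inv 0 t)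
        + p * (∑ t ∈ Finset.Icc 1 τ, S t)
      ≤ c * (∑ t ∈ Finset.Icc 1 τ,
              ∑ i, ∑ j ∈ Finset.univ.filter (fun j => j ≠ i), d i j * X i j t)
        + v * (∑ t ∈ Finset.Icc 1 τ, ∑ i ∈ ICset n, X 0 i t)
        + h * (∑ t ∈ Finset.Icc 1 τ, Inv 0 t)
        + p * (∑ t ∈ Finset.Icc 1 τ, S t) :=
  stmt_8_general n τ hn d hd_nonneg hd_tri a ha_nonneg c v h p hc hv Q hQ X Y F W Inv S hX_bin
    hF_nonneg hW_nonneg hflow hFcap hdeg_in hdeg_out hdepot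
end
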